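/- Let S be a finite state space and for each s ∈ [0,1] let p(·,·)(s) be transition probabilities on S (i.e. p(i,j)(s) ≥ 0 and ∑_{j∈S} p(i,j)(s) = 1 for each i ∈ S) such that for each s the transition matrix p(·,·)(s) admits a unique invariant probability measure μ(s). If p(i,j)(s) → p(i,j)(0) as s → 0 for every pair i,j ∈ S, then μ(i)(s) → μ(i)(0) as s → 0 for every i ∈ S. -/
import Mathlib


/-- If `p(·,·)(s)` are transition probabilities on a finite state space `S` for `s ∈ [0,1]`,
each admitting a unique invariant probability measure `μ(s)`, and `p(i,j)(s) → p(i,j)(0)`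
as `s → 0` for every `i, j`, then `μ(i)(s) → μ(i)(0)` as `s → 0` for every `i`. -/
theorem invariant_measure_continuous_at_zero
    {S : Type*} [Fintype S]
    (p : ℝ → S → S → ℝ) (μ : ℝ → S → ℝ)
    (hp_nonneg : ∀ s ∈ Set.Icc (0 : ℝ) 1, ∀ i j : S, 0 ≤ p s i j)
    (hp_sum : ∀ s ∈ Set.Icc (0 : ℝ) 1, ∀ i : S, ∑ j, p s i j = 1)
    (hμ_nonneg : ∀ s ∈ Set.Icc (0 : ℝ) 1, ∀ i : S, 0 ≤ μ s i)
    (hμ_sum : ∀ s ∈ Set.Icc (0 : ℝ) 1, ∑ i, μ s i = 1)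
    (hμ_inv : ∀ s ∈ Set.Icc (0 : ℝ) 1, ∀ j : S, ∑ i, μ s i * p s i j = μ s j)
    (hμ_unique : ∀ s ∈ Set.Icc (0 : ℝ) 1, ∀ ν : S → ℝ,
      (∀ i, 0 ≤ ν i) → ∑ i, ν i = 1 → (∀ j, ∑ i, ν i * p s i j = ν j) → ν = μ s)
    (hp_conv : ∀ i j : S,
      Filter.Tendsto (fun s => p s i j) (nhdsWithin 0 (Set.Icc (0 : ℝ) 1))
        (nhds (p 0 i j))) :
    ∀ i : S,
      Filter.Tendsto (fun s => μ s i) (nhdsWithin 0 (Set.Icc (0 : ℝ) 1))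
        (nhds (μ 0 i)) := by
  set L := nhdsWithin (0 : ℝ) (Set.Icc (0 : ℝ) 1) with hL
  have h0 : (0 : ℝ) ∈ Set.Icc (0 : ℝ) 1 := ⟨le_refl 0, zero_le_one⟩
  have hmem : ∀ᶠ s in L, s ∈ Set.Icc (0 : ℝ) 1 := self_mem_nhdsWithin
  -- the compact cube containing all measures
  set K : Set (S → ℝ) := Set.pi Set.univ (fun _ => Set.Icc (0 : ℝ) 1) with hK
  have hKc : IsCompact K := isCompact_univ_pi (fun _ => isCompact_Icc)
  have hμK : ∀ s ∈ Set.Icc (0 : ℝ) 1, μ s ∈ K := by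
    intro s hs i _
    refine ⟨hμ_nonneg s hs i, ?_⟩
    calc μ s i ≤ ∑ j, μ s j :=
          Finset.single_le_sum (fun j _ => hμ_nonneg s hs j) (Finset.mem_univ i)
      _ = 1 := hμ_sum s hs
  -- main: μ tends to μ 0 in the product topology
  have main : Filter.Tendsto (fun s => μ s) L (nhds (μ 0)) := by
    rw [Filter.tendsto_iff_ultrafilter]
    intro 𝒰 h𝒰
    have hmem𝒰 : ∀ᶠ s in (𝒰 : Filter ℝ), s ∈ Set.Icc (0 : ℝ) 1 := h𝒰 hmem
    have hle : Filter.map (fun s => μ s) (𝒰 : Filter ℝ) ≤ Filter.principal K := by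
      rw [Filter.le_principal_iff, Filter.mem_map]
      exact hmem𝒰.mono fun s hs => hμK s hs
    obtain ⟨x, hxK, hx⟩ := hKc.ultrafilter_le_nhds (𝒰.map (fun s => μ s)) hle
    have hx' : Filter.Tendsto (fun s => μ s) (𝒰 : Filter ℝ) (nhds x) := hx
    have hcoord : ∀ i : S, Filter.Tendsto (fun s => μ s i) (𝒰 : Filter ℝ) (nhds (x i)) :=
      fun i => ((continuous_apply i).tendsto x).comp hx'
    -- x is nonneg
    have hx_nonneg : ∀ i, 0 ≤ x i := fun i => (hxK i (Set.mem_univ i)).1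
    -- x sums to 1
    have hx_sum : ∑ i, x i = 1 := by
      have h1 : Filter.Tendsto (fun s => ∑ i, μ s i) (𝒰 : Filter ℝ) (nhds (∑ i, x i)) :=
        tendsto_finset_sum _ (fun i _ => hcoord i)
      have h2 : Filter.Tendsto (fun s => ∑ i, μ s i) (𝒰 : Filter ℝ) (nhds 1) := by
        refine Filter.Tendsto.congr' ?_ tendsto_const_nhds
        exact hmem𝒰.mono fun s hs => (hμ_sum s hs).symm
      exact tendsto_nhds_unique h1 h2
    -- x is invariant for p 0
    have hx_inv : ∀ j, ∑ i, x i * p 0 i j = x j := by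
      intro j
      have h1 : Filter.Tendsto (fun s => ∑ i, μ s i * p s i j) (𝒰 : Filter ℝ)
          (nhds (∑ i, x i * p 0 i j)) := by
        refine tendsto_finset_sum _ (fun i _ => (hcoord i).mul ?_)
        exact (hp_conv i j).mono_left h𝒰
      have h2 : Filter.Tendsto (fun s => ∑ i, μ s i * p s i j) (𝒰 : Filter ℝ)
          (nhds (x j)) := by
        refine Filter.Tendsto.congr' ?_ (hcoord j)
        exact hmem𝒰.mono fun s hs => (hμ_inv s hs j).symm
      exact tendsto_nhds_unique h1 h2
    have : x = μ 0 := hμ_unique 0 h0 x hx_nonneg hx_sum hx_inv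
    rw [← this]
    exact hx
  intro i
  exact ((continuous_apply i).tendsto (μ 0)).comp main
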